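/- Let k be a positive integer and let G be a connected graph that contains no internal i-edge cut for any i ∈ {1, …, k−1}. If v, v_1, …, v_i are distinct vertices of G with i ∈ {1, …, k−1} and the degree of v in G is at least i, then there exist i pairwise edge-disjoint paths in G from v to v_1, v_2, …, v_i (one path to each v_j). -/

import Mathlib

attribute [local instance] Classical.propDecidable

set_option autoImplicit false

noncomputable section

/-- A finite undirected loopless multigraph: a finite type of vertices, a finite type of
edges, and a map assigning to every edge its (unordered) pair of distinct endpoints. -/
structure Multigraph : Type 1 where
  V : Type
  E : Type
  finV : Finite V
  finE : Finite E
  ends : E → Sym2 V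
  loopless : ∀ e, ¬ (ends e).IsDiag

attribute [instance] Multigraph.finV Multigraph.finE

namespace Multigraph

variable {G : Multigraph}

/-- Walks in a multigraph, recorded together with their two endpoints. -/
inductive Walk (G : Multigraph) : G.V → G.V → Type where
  | nil {v : G.V} : Walk G v v
  | cons {u v w : G.V} (e : G.E) (h : G.ends e = s(u, v)) (t : Walk G v w) : Walk G u w

namespace Walk

/-- The list of edges traversed by a walk. -/
def edges : ∀ {u v : G.V}, G.Walk u v → List G.E
  | _, _, nil => []
  | _, _, cons e _ t => e :: t.edges

/-- The list of vertices visited by a walk (in order). -/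
def support : ∀ {u v : G.V}, G.Walk u v → List G.V
  | u, _, nil => [u]
  | u, _, cons _ _ t => u :: t.support

/-- Concatenation of walks. -/
def append : ∀ {u v w : G.V}, G.Walk u v → G.Walk v w → G.Walk u w
  | _, _, _, nil, q => q
  | _, _, _, cons e h t, q => cons e h (t.append q)

/-- Reversal of a walk. -/
def reverse : ∀ {u v : G.V}, G.Walk u v → G.Walk v u
  | _, _, nil => nil
  | _, _, cons e h t => t.reverse.append (cons e (by rw [h]; exact Sym2.eq_swap) nil)

/-- A walk is a path if it visits no vertex twice.  (A single vertex is a trivial path.) -/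
def IsPath {u v : G.V} (w : G.Walk u v) : Prop := w.support.Nodup

/-- A closed walk is a cycle if it uses at least one edge, repeats no edge, and repeats
no vertex except that it ends where it started. -/
def IsCycle {v : G.V} (w : G.Walk v v) : Prop :=
  w.edges ≠ [] ∧ w.edges.Nodup ∧ w.support.tail.Nodup

/-- The set of edges of a walk. -/
def edgeSet {u v : G.V} (w : G.Walk u v) : Set G.E := {e | e ∈ w.edges}

/-- The set of vertices of a walk. -/
def supportSet {u v : G.V} (w : G.Walk u v) : Set G.V := {x | x ∈ w.support}

end Walk

/-- Two walks are edge-disjoint if they share no edge. -/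
def EdgeDisjoint {u v u' v' : G.V} (p : G.Walk u v) (q : G.Walk u' v') : Prop :=
  ∀ e : G.E, e ∈ p.edges → e ∉ q.edges

/-- Two vertices are reachable from one another if some walk joins them. -/
def Reachable (G : Multigraph) (u v : G.V) : Prop := Nonempty (G.Walk u v)

/-- Reachability is an equivalence relation. -/
def reachSetoid (G : Multigraph) : Setoid G.V :=
  ⟨G.Reachable,
    ⟨fun _ => ⟨Walk.nil⟩, fun ⟨w⟩ => ⟨w.reverse⟩, fun ⟨w⟩ ⟨w'⟩ => ⟨w.append w'⟩⟩⟩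

/-- A multigraph is connected if every two vertices are joined by a walk. -/
def Connected (G : Multigraph) : Prop := ∀ u v : G.V, G.Reachable u v

/-- The number of connected components. -/
def numComponents (G : Multigraph) : ℕ := Nat.card (Quotient G.reachSetoid)

/-- A set of vertices is connected in `G` if any two of its vertices are joined by a
walk staying inside the set. -/
def ConnectedIn (G : Multigraph) (S : Set G.V) : Prop :=
  ∀ u ∈ S, ∀ v ∈ S, ∃ w : G.Walk u v, ∀ x ∈ w.support, x ∈ S

/-- Reachability inside a prescribed set of vertices, using only a prescribed
set of edges. -/
def ReachableWithin (G : Multigraph) (W : Set G.V) (E₀ : Set G.E) (u v : G.V) : Prop :=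
  ∃ w : G.Walk u v, (∀ x ∈ w.support, x ∈ W) ∧ ∀ e ∈ w.edges, e ∈ E₀

/-- The degree of a vertex: the number of edges incident to it. -/
def degree (G : Multigraph) (v : G.V) : ℕ := Nat.card {e : G.E // v ∈ G.ends e}

/-- A multigraph is sub-cubic if all its vertices have degree at most `3`. -/
def SubCubic (G : Multigraph) : Prop := ∀ v : G.V, G.degree v ≤ 3

/-- Deletion of a set of edges. -/
def deleteEdges (G : Multigraph) (F : Set G.E) : Multigraph where
  V := G.V
  E := {e : G.E // e ∉ F}
  finV := G.finV
  finE := inferInstance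
  ends := fun e => G.ends e.1
  loopless := fun e => G.loopless e.1

/-- An edge cut: a non-empty set of edges, all lying in one connected component,
whose deletion increases the number of connected components. -/
def IsEdgeCut (G : Multigraph) (F : Set G.E) : Prop :=
  F.Nonempty ∧
  (∀ e ∈ F, ∀ e' ∈ F, ∀ u v : G.V, u ∈ G.ends e → v ∈ G.ends e' → G.Reachable u v) ∧
  G.numComponents < (G.deleteEdges F).numComponents

/-- A minimal edge cut: its deletion produces exactly one more connected component. -/
def IsMinimalEdgeCut (G : Multigraph) (F : Set G.E) : Prop :=
  G.IsEdgeCut F ∧ (G.deleteEdges F).numComponents = G.numComponents + 1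

/-- An internal edge cut: a minimal edge cut such that both connected components into
which the component of `G` containing the cut is split have at least `2` vertices.
(Equivalently: every vertex of the component of `G` containing the cut lies, after
deletion of the cut, in a component with at least `2` vertices.) -/
def IsInternalEdgeCut (G : Multigraph) (F : Set G.E) : Prop :=
  G.IsMinimalEdgeCut F ∧
  ∀ v : G.V, (∃ e ∈ F, ∃ u ∈ G.ends e, G.Reachable v u) →
    2 ≤ Nat.card {u : G.V | (G.deleteEdges F).Reachable u v}

/-- `H` is immersed in `G`: there is an injection `f` of the vertices of `H` into the
vertices of `G`, and for every edge `{u,v}` of `H` a path in `G` from `f u` to `f v`,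
these paths being pairwise edge-disjoint. -/
def Immersion (H G : Multigraph) : Prop :=
  ∃ f : H.V → G.V, Function.Injective f ∧
    ∃ P : H.E → Σ a : G.V, Σ b : G.V, G.Walk a b,
      (∀ e : H.E, (P e).2.2.IsPath) ∧
      (∀ e : H.E, (H.ends e).map f = s((P e).1, (P e).2.1)) ∧
      ∀ e e' : H.E, e ≠ e' → EdgeDisjoint (P e).2.2 (P e').2.2

/-- The complete graph on five vertices. -/
def K5 : Multigraph where
  V := Fin 5
  E := {p : Sym2 (Fin 5) // ¬ p.IsDiag}
  finV := inferInstance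
  finE := inferInstance
  ends := fun e => e.1
  loopless := fun e => e.2

/-- The complete bipartite graph with two parts of three vertices. -/
def K33 : Multigraph where
  V := Fin 3 ⊕ Fin 3
  E := Fin 3 × Fin 3
  finV := inferInstance
  finE := inferInstance
  ends := fun p => s(Sum.inl p.1, Sum.inr p.2)
  loopless := fun p h => by
    rw [Sym2.mk_isDiag_iff] at h
    cases h

private lemma contract_key {α : Type} (S : Set α) (z : Sym2 α) :
    ¬ z.IsDiag → (¬ ∀ v ∈ z, v ∈ S) →
    ¬ (z.map fun v =>
        if h : v ∈ S then (Sum.inr () : {v : α // v ∉ S} ⊕ Unit) else Sum.inl ⟨v, h⟩).IsDiag := by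
  induction z using Sym2.ind with
  | _ a b =>
    intro hdiag hS h
    rw [Sym2.map_pair_eq, Sym2.mk_isDiag_iff] at h
    by_cases ha : a ∈ S <;> by_cases hb : b ∈ S
    · exact hS fun v hv => by rcases Sym2.mem_iff.mp hv with rfl | rfl <;> assumption
    · rw [dif_pos ha, dif_neg hb] at h
      cases h
    · rw [dif_neg ha, dif_pos hb] at h
      cases h
    · rw [dif_neg ha, dif_neg hb] at h
      injection h with h'
      exact hdiag (Sym2.mk_isDiag_iff.mpr (congrArg Subtype.val h'))

/-- Contraction of a set `S` of vertices of `G` to a single new vertex: edges lying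
entirely inside `S` disappear, edges meeting `S` are redirected to the new vertex.
(When `S` induces a connected subgraph this is the result of contracting all its edges.) -/
def contractSet (G : Multigraph) (S : Set G.V) : Multigraph where
  V := {v : G.V // v ∉ S} ⊕ Unit
  E := {e : G.E // ¬ ∀ v ∈ G.ends e, v ∈ S}
  finV := inferInstance
  finE := inferInstance
  ends := fun e => (G.ends e.1).map fun v =>
    if h : v ∈ S then Sum.inr () else Sum.inl ⟨v, h⟩
  loopless := fun e => contract_key S (G.ends e.1) (G.loopless e.1) e.2

/-- The graph obtained from `G` by subdividing every edge exactly once: each edge `e`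
is replaced by a new vertex joined to the two endpoints of `e`. -/
def subdivision (G : Multigraph) : Multigraph where
  V := G.V ⊕ G.E
  E := Σ e : G.E, {v : G.V // v ∈ G.ends e}
  finV := inferInstance
  finE := inferInstance
  ends := fun p => s(Sum.inl p.2.1, Sum.inr p.1)
  loopless := fun p h => by
    rw [Sym2.mk_isDiag_iff] at h
    cases h

/-- The multigraph associated with a simple graph. -/
def ofSimpleGraph {α : Type} [Finite α] (H : SimpleGraph α) : Multigraph where
  V := α
  E := {p : Sym2 α // p ∈ H.edgeSet}
  finV := ‹Finite α›
  finE := inferInstance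
  ends := fun e => e.1
  loopless := fun e => H.not_isDiag_of_mem_edgeSet e.2

/-- The `(r,q)`-cylinder: the cartesian product of a cycle on `r` vertices and a path
on `q` vertices. -/
def cylinder (r q : ℕ) : Multigraph :=
  ofSimpleGraph ((SimpleGraph.cycleGraph r).boxProd (SimpleGraph.pathGraph q))

/-- `H` is a minor of `G`: there are pairwise disjoint nonempty connected branch sets
`β u ⊆ V(G)`, one for every vertex `u` of `H`, and an injection `φ` of the edges of `H`
into the edges of `G` such that the edge `φ e` joins the branch sets of the two
endpoints of `e`. -/
def IsMinor (H G : Multigraph) : Prop :=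
  ∃ β : H.V → Set G.V, ∃ φ : H.E → G.E,
    Function.Injective φ ∧
    (∀ u : H.V, (β u).Nonempty) ∧
    (∀ u : H.V, G.ConnectedIn (β u)) ∧
    (∀ u v : H.V, u ≠ v → Disjoint (β u) (β v)) ∧
    ∀ (e : H.E) (u v : H.V), H.ends e = s(u, v) →
      ∃ x y : G.V, G.ends (φ e) = s(x, y) ∧ x ∈ β u ∧ y ∈ β v

/-- The degree of a vertex of a simple graph (number of neighbours). -/
def simpleDegree {n : ℕ} (T : SimpleGraph (Fin n)) (v : Fin n) : ℕ :=
  Nat.card {u : Fin n // T.Adj v u}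

/-- A branch decomposition of `G`: a ternary tree `T` together with a bijection between
the edges of `G` and the leaves of `T`. -/
structure BranchDecomposition (G : Multigraph) where
  n : ℕ
  T : SimpleGraph (Fin n)
  acyclic : T.IsAcyclic
  preconnected : T.Preconnected
  ternary : ∀ v : Fin n, simpleDegree T v ≤ 1 ∨ simpleDegree T v = 3
  leafEquiv : G.E ≃ {v : Fin n // simpleDegree T v ≤ 1}

/-- For an edge `{a,b}` of the tree of a branch decomposition, the number of vertices of
`G` incident both with an edge mapped to a leaf on the side of `a` and with an edge
mapped to a leaf on the side of `b` (sides taken in `T` minus the edge `{a,b}`). -/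
def BranchDecomposition.sigmaWidth {G : Multigraph} (B : BranchDecomposition G)
    (a b : Fin B.n) : ℕ :=
  Nat.card {x : G.V | ∃ e₁ e₂ : G.E, x ∈ G.ends e₁ ∧ x ∈ G.ends e₂ ∧
    (B.T.deleteEdges {s(a, b)}).Reachable (B.leafEquiv e₁).1 a ∧
    (B.T.deleteEdges {s(a, b)}).Reachable (B.leafEquiv e₂).1 b}

/-- The width of a branch decomposition. -/
def BranchDecomposition.width {G : Multigraph} (B : BranchDecomposition G) : ℕ :=
  sSup {w : ℕ | ∃ a b : Fin B.n, B.T.Adj a b ∧ w = B.sigmaWidth a b}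

/-- The branch-width of `G`: the minimum width of a branch decomposition of `G`. -/
def branchwidth (G : Multigraph) : ℕ :=
  sInf {w : ℕ | ∃ B : BranchDecomposition G, B.width = w}

/-- A (topological) embedding of the multigraph `G` in the space `X`: vertices become
distinct points, edges become arcs joining the images of their endpoints, arcs meet
vertex images only at their endpoints and meet each other only at images of vertices. -/
structure EmbeddingIn (G : Multigraph) (X : Type) [TopologicalSpace X] where
  vmap : G.V → X
  emap : G.E → unitInterval → X
  vmap_inj : Function.Injective vmap
  emap_cont : ∀ e, Continuous (emap e)
  emap_inj : ∀ e, Function.Injective (emap e)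
  emap_ends : ∀ e, (G.ends e).map vmap = s(emap e 0, emap e 1)
  emap_vertex : ∀ e t, emap e t ∈ Set.range vmap → t = 0 ∨ t = 1
  emap_disjoint : ∀ e e', e ≠ e' → ∀ t t', emap e t = emap e' t' →
    emap e t ∈ Set.range vmap

variable {X : Type} [TopologicalSpace X]

/-- The set of points of `X` occupied by the embedded graph. -/
def EmbeddingIn.carrier (emb : EmbeddingIn G X) : Set X :=
  Set.range emb.vmap ∪ ⋃ e : G.E, Set.range (emb.emap e)

/-- The set of points of `X` occupied by an embedded walk. -/
def EmbeddingIn.walkImage (emb : EmbeddingIn G X) {u v : G.V} (w : G.Walk u v) : Set X :=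
  (emb.vmap '' w.supportSet) ∪ ⋃ e ∈ w.edges, Set.range (emb.emap e)

/-- An open disk in `X`: an open set homeomorphic to an open disk of the plane. -/
def IsOpenDisk (U : Set X) : Prop :=
  IsOpen U ∧ Nonempty (↥U ≃ₜ ↥(Metric.ball (0 : EuclideanSpace ℝ (Fin 2)) 1))

/-- A disk around the vertex `x`: an open disk containing (the image of) `x` all of
whose points on the graph are `x` itself or lie on edges incident with `x`. -/
def EmbeddingIn.IsDiskAround (emb : EmbeddingIn G X) (x : G.V) (Δ : Set X) : Prop :=
  IsOpenDisk Δ ∧ emb.vmap x ∈ Δ ∧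
  ∀ p ∈ Δ ∩ emb.carrier,
    p = emb.vmap x ∨ ∃ e : G.E, x ∈ G.ends e ∧ p ∈ Set.range (emb.emap e)

/-- Two edge-disjoint walks are confluent if for every common vertex `x` that is not an
endpoint of either of them and every disk `Δ` around `x`, one of the connected
components of `Δ` minus the first walk contains no point of the second walk. -/
def Confluent (emb : EmbeddingIn G X) {u₁ w₁ u₂ w₂ : G.V}
    (P₁ : G.Walk u₁ w₁) (P₂ : G.Walk u₂ w₂) : Prop :=
  ∀ x : G.V, x ∈ P₁.support → x ∈ P₂.support →
    x ≠ u₁ → x ≠ w₁ → x ≠ u₂ → x ≠ w₂ →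
    ∀ Δ : Set X, emb.IsDiskAround x Δ →
      ∃ p ∈ Δ \ emb.walkImage P₁,
        connectedComponentIn (Δ \ emb.walkImage P₁) p ∩ emb.walkImage P₂ = ∅

/-- `x` is an overlapping vertex of `P₁` and `P₂`: a common vertex, not an endpoint of
either walk, such that for some disk `Δ` around `x` both connected components of `Δ`
minus `P₁` contain points of `P₂`. -/
def OverlapVertex (emb : EmbeddingIn G X) (x : G.V) {u₁ w₁ u₂ w₂ : G.V}
    (P₁ : G.Walk u₁ w₁) (P₂ : G.Walk u₂ w₂) : Prop :=
  x ∈ P₁.support ∧ x ∈ P₂.support ∧ x ≠ u₁ ∧ x ≠ w₁ ∧ x ≠ u₂ ∧ x ≠ w₂ ∧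
  ∃ Δ : Set X, emb.IsDiskAround x Δ ∧
    ∀ p ∈ Δ \ emb.walkImage P₁,
      (connectedComponentIn (Δ \ emb.walkImage P₁) p ∩ emb.walkImage P₂).Nonempty

/-- Two walks with the same first vertex are well-arranged if their common vertices
appear in the same order in both. -/
def WellArranged {u v₁ v₂ : G.V} (P₁ : G.Walk u v₁) (P₂ : G.Walk u v₂) : Prop :=
  P₁.support.filter (fun x => decide (x ∈ P₂.support)) =
    P₂.support.filter (fun x => decide (x ∈ P₁.support))

/-- `f_𝒫(x)`: the number of pairs of walks of the collection `P` for which `x` is an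
overlapping vertex. -/
def overlapCount (emb : EmbeddingIn G X) {r : ℕ} {v : G.V} {vs : Fin r → G.V}
    (P : (i : Fin r) → G.Walk v (vs i)) (x : G.V) : ℕ :=
  Nat.card {p : Fin r × Fin r // p.1 < p.2 ∧
    (OverlapVertex emb x (P p.1) (P p.2) ∨ OverlapVertex emb x (P p.2) (P p.1))}

/-- `g(𝒫)`: the sum over all vertices `x` of `f_𝒫(x)`. -/
def gFun (emb : EmbeddingIn G X) {r : ℕ} {v : G.V} {vs : Fin r → G.V}
    (P : (i : Fin r) → G.Walk v (vs i)) : ℕ :=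
  ∑ᶠ x : G.V, overlapCount emb P x

/-- The 2-dimensional sphere. -/
abbrev Sphere2 : Type := ↥(Metric.sphere (0 : EuclideanSpace ℝ (Fin 3)) 1)

/-- A multigraph is planar if it embeds in the sphere. -/
def Planar (G : Multigraph) : Prop := Nonempty (EmbeddingIn G Sphere2)

/-- The annulus between two disjoint cycles with point sets `K₁`, `K₂` on the sphere:
the complement of the two open disks `Δᵢ` bounded by `Kᵢ` containing no point of the
other cycle. -/
def annulusBetween (K₁ K₂ : Set Sphere2) : Set Sphere2 :=
  ({x : Sphere2 | x ∉ K₁ ∧ connectedComponentIn K₁ᶜ x ∩ K₂ = ∅} ∪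
   {x : Sphere2 | x ∉ K₂ ∧ connectedComponentIn K₂ᶜ x ∩ K₁ = ∅})ᶜ

/-- A collection of `r` pairwise disjoint cycles embedded in the sphere is nested if
consecutive annuli between them compose. -/
def NestedCycles (emb : EmbeddingIn G Sphere2) (r : ℕ) (c : Fin r → G.V)
    (C : (i : Fin r) → G.Walk (c i) (c i)) : Prop :=
  (∀ i, (C i).IsCycle) ∧
  (∀ i j : Fin r, i ≠ j → ∀ x, x ∈ (C i).support → x ∉ (C j).support) ∧
  ∀ (i : Fin r) (h2 : i.1 + 2 < r),
    annulusBetween (emb.walkImage (C i)) (emb.walkImage (C ⟨i.1 + 1, by omega⟩)) ∪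
      annulusBetween (emb.walkImage (C ⟨i.1 + 1, by omega⟩))
        (emb.walkImage (C ⟨i.1 + 2, h2⟩)) =
    annulusBetween (emb.walkImage (C i)) (emb.walkImage (C ⟨i.1 + 2, h2⟩))

/-- The intersection of the walks `P` and `C` is a (possibly trivial) path: the common
vertices and common edges of `P` and `C` are exactly those of some path, in particular
`P` meets `C`. -/
def IsPathIntersection (G : Multigraph) {a b c d : G.V}
    (P : G.Walk a b) (C : G.Walk c d) : Prop :=
  ∃ (x y : G.V) (Q : G.Walk x y), Q.IsPath ∧
    Q.supportSet = P.supportSet ∩ C.supportSet ∧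
    Q.edgeSet = P.edgeSet ∩ C.edgeSet

/-- `G`, embedded in the sphere by `emb`, contains an `(r,q)`-railed annulus: `r` nested
pairwise disjoint cycles all met by `q` paths (rails), the intersection of each rail
with each cycle being a (possibly trivial) path. -/
def HasRailedAnnulus (G : Multigraph) (emb : EmbeddingIn G Sphere2) (r q : ℕ) : Prop :=
  ∃ (c : Fin r → G.V) (C : (i : Fin r) → G.Walk (c i) (c i)),
    NestedCycles emb r c C ∧
    ∃ (a b : Fin q → G.V) (P : (j : Fin q) → G.Walk (a j) (b j)),
      (∀ j, (P j).IsPath) ∧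
      ∀ (i : Fin r) (j : Fin q), IsPathIntersection G (P j) (C i)

/-- `G` is a `k`-edge-sum of `G₁` and `G₂`: there are vertices `v₁` of `G₁` and `v₂` of
`G₂`, both of degree `k`, and a bijection `σ` between the edges at `v₁` and the edges at
`v₂`, such that `G` is obtained from the disjoint union of `G₁` and `G₂` by deleting
`v₁` and `v₂` and lifting every pair `e`, `σ e` to a single new edge. -/
def IsEdgeSum (G G₁ G₂ : Multigraph) (k : ℕ) : Prop :=
  ∃ (v₁ : G₁.V) (v₂ : G₂.V),
    G₁.degree v₁ = k ∧ G₂.degree v₂ = k ∧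
    ∃ (σ : {e : G₁.E // v₁ ∈ G₁.ends e} ≃ {e : G₂.E // v₂ ∈ G₂.ends e})
      (fV : ({u : G₁.V // u ≠ v₁} ⊕ {u : G₂.V // u ≠ v₂}) ≃ G.V)
      (fE : ({e : G₁.E // v₁ ∉ G₁.ends e} ⊕ {e : G₂.E // v₂ ∉ G₂.ends e} ⊕
        {e : G₁.E // v₁ ∈ G₁.ends e}) ≃ G.E),
      (∀ (e : G₁.E) (he : v₁ ∉ G₁.ends e) (a b : G₁.V), G₁.ends e = s(a, b) →
        ∃ (ha : a ≠ v₁) (hb : b ≠ v₁),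
          G.ends (fE (Sum.inl ⟨e, he⟩)) = s(fV (Sum.inl ⟨a, ha⟩), fV (Sum.inl ⟨b, hb⟩))) ∧
      (∀ (e : G₂.E) (he : v₂ ∉ G₂.ends e) (a b : G₂.V), G₂.ends e = s(a, b) →
        ∃ (ha : a ≠ v₂) (hb : b ≠ v₂),
          G.ends (fE (Sum.inr (Sum.inl ⟨e, he⟩))) =
            s(fV (Sum.inr ⟨a, ha⟩), fV (Sum.inr ⟨b, hb⟩))) ∧
      ∀ (e : {e : G₁.E // v₁ ∈ G₁.ends e}) (a : G₁.V) (b : G₂.V),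
        G₁.ends e.1 = s(v₁, a) → G₂.ends (σ e).1 = s(v₂, b) →
        ∃ (ha : a ≠ v₁) (hb : b ≠ v₂),
          G.ends (fE (Sum.inr (Sum.inr e))) =
            s(fV (Sum.inl ⟨a, ha⟩), fV (Sum.inr ⟨b, hb⟩))

/-- `G` can be constructed by applying consecutive `i`-edge-sums, for `i ≤ 3`,
starting from graphs satisfying the predicate `base`. -/
inductive ConstructibleFrom (base : Multigraph → Prop) : Multigraph → Prop where
  | base (G : Multigraph) : base G → ConstructibleFrom base G
  | edgeSum (G G₁ G₂ : Multigraph) (k : ℕ) (hk : k ≤ 3) :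
      ConstructibleFrom base G₁ → ConstructibleFrom base G₂ →
      IsEdgeSum G G₁ G₂ k → ConstructibleFrom base G

end Multigraph
/-!
Send one unit of flow from `v` to each `vⱼ` through `G`, every edge having capacity one,
augmenting along residual paths one target at a time as in the Ford–Fulkerson method. If no
residual path reaches a new target `t`, the set `S` of vertices reachable by residual paths has
a saturated boundary with fewer than `i` edges, and the component `C` of `t` in `G - ∂S` gives
an internal edge cut `∂C ⊆ ∂S`: `C = {t}` fails since `t` absorbs nothing yet while all its
edges would carry flow into it, and `V ∖ C = {v}` fails since `v` would emit `deg v ≥ i`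
units instead of fewer than `i`. The completed flow is then peeled into `i` edge-disjoint
paths.
-/

namespace Multigraph

variable {G : Multigraph}

instance (G : Multigraph) : Fintype G.V := Fintype.ofFinite _

instance (G : Multigraph) : Fintype G.E := Fintype.ofFinite _

/-- An arbitrary orientation of `e`; it only fixes the sign convention for flows. -/
def orientation (e : G.E) : G.V × G.V := (G.ends e).out

lemma ends_eq_orientation (e : G.E) :
    G.ends e = s((orientation e).1, (orientation e).2) :=
  (Quot.out_eq _).symm

lemma orientation_cases {e : G.E} {x y : G.V} (h : G.ends e = s(x, y)) :
    (orientation e).1 = x ∧ (orientation e).2 = y ∨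
      (orientation e).1 = y ∧ (orientation e).2 = x :=
  Sym2.eq_iff.mp ((ends_eq_orientation e).symm.trans h)

lemma ne_of_ends_eq {e : G.E} {x y : G.V} (h : G.ends e = s(x, y)) : x ≠ y := by
  rintro rfl
  exact G.loopless e (h ▸ Sym2.mk_isDiag_iff.mpr rfl)

lemma exists_ends_eq_of_mem {e : G.E} {x : G.V} (h : x ∈ G.ends e) :
    ∃ y, G.ends e = s(x, y) := by
  rw [ends_eq_orientation e, Sym2.mem_iff] at h
  rcases h with rfl | rfl
  · exact ⟨_, ends_eq_orientation e⟩
  · exact ⟨_, (ends_eq_orientation e).trans Sym2.eq_swap⟩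

lemma one_le_degree (hconn : G.Connected) {x y : G.V} (hxy : x ≠ y) : 1 ≤ G.degree x := by
  obtain ⟨W⟩ := hconn x y
  cases W with
  | nil => exact absurd rfl hxy
  | cons e h _ =>
    have : Nonempty {e // x ∈ G.ends e} := ⟨⟨e, h ▸ Sym2.mem_mk_left _ _⟩⟩
    exact Nat.card_pos

def incSign (e : G.E) (x : G.V) : ℤ :=
  (if (orientation e).1 = x then 1 else 0) - (if (orientation e).2 = x then 1 else 0)

lemma incSign_of_ends_eq {e : G.E} {x y : G.V} (h : G.ends e = s(x, y)) :
    incSign e x = 1 ∧ incSign e y = -1 ∨ incSign e x = -1 ∧ incSign e y = 1 := by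
  have hxy := ne_of_ends_eq h
  rcases orientation_cases h with ⟨h1, h2⟩ | ⟨h1, h2⟩ <;>
    simp [incSign, h1, h2, hxy, hxy.symm]

lemma incSign_swap {e : G.E} {x y : G.V} (h : G.ends e = s(x, y)) :
    incSign e y = -incSign e x := by
  rcases incSign_of_ends_eq h with ⟨h1, h2⟩ | ⟨h1, h2⟩ <;> simp [h1, h2]

lemma incSign_eq_one_or_neg_one {e : G.E} {x : G.V} (h : x ∈ G.ends e) :
    incSign e x = 1 ∨ incSign e x = -1 := by
  obtain ⟨y, hy⟩ := exists_ends_eq_of_mem h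
  rcases incSign_of_ends_eq hy with ⟨h1, -⟩ | ⟨h1, -⟩ <;> simp [h1]

lemma incSign_eq_zero {e : G.E} {x : G.V} (h : x ∉ G.ends e) : incSign e x = 0 := by
  rw [ends_eq_orientation e, Sym2.mem_iff, not_or] at h
  simp [incSign, Ne.symm h.1, Ne.symm h.2]

lemma incSign_mul_incSign {e : G.E} {x y : G.V} (h : G.ends e = s(x, y)) (u : G.V) :
    incSign e u * incSign e x = (if u = x then 1 else 0) - (if u = y then 1 else 0) := by
  have hxy := ne_of_ends_eq h
  by_cases hux : u = x
  · subst hux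
    rcases incSign_of_ends_eq h with ⟨h1, -⟩ | ⟨h1, -⟩ <;> simp [h1, hxy]
  by_cases huy : u = y
  · subst huy
    rcases incSign_of_ends_eq h with ⟨h1, h2⟩ | ⟨h1, h2⟩ <;> simp [h1, h2, hux]
  · rw [incSign_eq_zero (by rw [h, Sym2.mem_iff]; tauto)]
    simp [hux, huy]

/-- `f e > 0` means that `f` sends flow along the orientation of `e`. -/
def outflow (f : G.E → ℤ) (x : G.V) : ℤ := ∑ e, incSign e x * f e

lemma outflow_add (f g : G.E → ℤ) (x : G.V) :
    outflow (f + g) x = outflow f x + outflow g x := by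
  simp only [outflow, Pi.add_apply, mul_add, Finset.sum_add_distrib]

lemma outflow_sub (f g : G.E → ℤ) (x : G.V) :
    outflow (f - g) x = outflow f x - outflow g x := by
  simp only [outflow, Pi.sub_apply, mul_sub, Finset.sum_sub_distrib]

lemma outflow_single (e : G.E) (c : ℤ) (x : G.V) :
    outflow (Pi.single e c) x = incSign e x * c := by
  rw [outflow, Finset.sum_eq_single e (fun b _ hb => by simp [hb]) (by simp)]
  simp

lemma outflow_eq_mul_degree {f : G.E → ℤ} {x : G.V} {c : ℤ}
    (h : ∀ e, x ∈ G.ends e → incSign e x * f e = c) : outflow f x = c * G.degree x := by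
  have : ∀ e, incSign e x * f e = if x ∈ G.ends e then c else 0 := fun e => by
    split_ifs with hx
    · exact h e hx
    · rw [incSign_eq_zero hx, zero_mul]
  rw [outflow, Finset.sum_congr rfl fun e _ => this e, Finset.sum_ite, Finset.sum_const_zero,
    add_zero, Finset.sum_const, nsmul_eq_mul, mul_comm, degree, Nat.card_eq_fintype_card,
    Fintype.card_subtype]

namespace Walk

def darts : ∀ {a b : G.V}, G.Walk a b → List (G.E × G.V)
  | _, _, nil => []
  | a, _, cons e _ t => (e, a) :: t.darts

def flow : ∀ {a b : G.V}, G.Walk a b → G.E → ℤ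
  | _, _, nil => 0
  | a, _, cons e _ t => Pi.single e (incSign e a) + t.flow

variable {a b : G.V}

lemma edges_eq_map_darts (W : G.Walk a b) : W.edges = W.darts.map Prod.fst := by
  induction W with
  | nil => rfl
  | cons e h t ih => simp [edges, darts, ih]

lemma exists_mem_darts_of_mem_edges (W : G.Walk a b) {e : G.E} (he : e ∈ W.edges) :
    ∃ x, (e, x) ∈ W.darts := by
  obtain ⟨⟨_, x⟩, hd, rfl⟩ := List.mem_map.mp (W.edges_eq_map_darts ▸ he)
  exact ⟨x, hd⟩

lemma mem_ends_of_mem_darts (W : G.Walk a b) {d : G.E × G.V} (hd : d ∈ W.darts) :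
    d.2 ∈ G.ends d.1 := by
  induction W with
  | nil => simp [darts] at hd
  | cons e h t ih =>
    rcases List.mem_cons.mp hd with rfl | hd
    · exact h ▸ Sym2.mem_mk_left _ _
    · exact ih hd

lemma mem_support_of_mem_edges (W : G.Walk a b) {e : G.E} {x : G.V} (he : e ∈ W.edges)
    (hx : x ∈ G.ends e) : x ∈ W.support := by
  induction W with
  | nil => simp [edges] at he
  | @cons u w _ e' h t ih =>
    rcases List.mem_cons.mp he with rfl | he
    · rw [h, Sym2.mem_iff] at hx
      rcases hx with rfl | rfl
      · exact List.mem_cons_self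
      · cases t <;> exact List.mem_cons_of_mem _ List.mem_cons_self
    · exact List.mem_cons_of_mem _ (ih he)

lemma edges_nodup_of_isPath {W : G.Walk a b} (hW : W.IsPath) : W.edges.Nodup := by
  induction W with
  | nil => exact List.nodup_nil
  | cons e h t ih =>
    rw [IsPath, support, List.nodup_cons] at hW
    exact List.nodup_cons.mpr
      ⟨fun he => hW.1 (t.mem_support_of_mem_edges he (h ▸ Sym2.mem_mk_left _ _)), ih hW.2⟩

lemma exists_suffix_of_mem_support (W : G.Walk a b) {c : G.V} (hc : c ∈ W.support) :
    ∃ W' : G.Walk c b, W'.support <:+ W.support ∧ W'.darts <:+ W.darts := by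
  induction W with
  | nil =>
    obtain rfl := List.mem_singleton.mp hc
    exact ⟨nil, List.suffix_refl _, List.suffix_refl _⟩
  | @cons u _ _ e h t ih =>
    by_cases hcu : c = u
    · subst hcu
      exact ⟨cons e h t, List.suffix_refl _, List.suffix_refl _⟩
    · obtain ⟨W', hs, hd⟩ := ih ((List.mem_cons.mp hc).resolve_left hcu)
      exact ⟨W', hs.trans (List.suffix_cons _ _), hd.trans (List.suffix_cons _ _)⟩

lemma outflow_flow (W : G.Walk a b) (x : G.V) :
    outflow W.flow x = (if x = a then 1 else 0) - (if x = b then 1 else 0) := by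
  induction W with
  | nil => simp [flow, outflow]
  | cons e h t ih =>
    rw [flow, outflow_add, outflow_single, ih, incSign_mul_incSign h]
    ring

lemma flow_eq_zero {W : G.Walk a b} {e : G.E} (he : e ∉ W.edges) : W.flow e = 0 := by
  induction W with
  | nil => rfl
  | cons e' h t ih =>
    rw [edges, List.mem_cons, not_or] at he
    simp [flow, he.1, ih he.2]

lemma flow_eq_incSign {W : G.Walk a b} (hW : W.edges.Nodup) {e : G.E} {x : G.V}
    (hd : (e, x) ∈ W.darts) : W.flow e = incSign e x := by
  induction W with
  | nil => simp [darts] at hd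
  | cons e' h t ih =>
    rw [edges, List.nodup_cons] at hW
    rcases List.mem_cons.mp hd with hd | hd
    · obtain ⟨rfl, rfl⟩ := Prod.mk.inj hd
      simp [flow, flow_eq_zero hW.1]
    · have he : e ∈ t.edges := t.edges_eq_map_darts ▸ List.mem_map_of_mem (f := Prod.fst) hd
      have hne : e ≠ e' := fun h => hW.1 (h ▸ he)
      simp [flow, hne, ih hW.2 hd]

end Walk

def AdjBy (G : Multigraph) (p : G.E → G.V → Prop) (x y : G.V) : Prop :=
  ∃ e, G.ends e = s(x, y) ∧ p e x

lemma exists_isPath_of_reflTransGen {p : G.E → G.V → Prop} {a b : G.V}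
    (h : Relation.ReflTransGen (G.AdjBy p) a b) :
    ∃ W : G.Walk a b, W.IsPath ∧ ∀ d ∈ W.darts, p d.1 d.2 := by
  induction h using Relation.ReflTransGen.head_induction_on with
  | refl => exact ⟨.nil, List.nodup_singleton _, by simp [Walk.darts]⟩
  | @head a c hstep _ ih =>
    obtain ⟨e, he, hp⟩ := hstep
    obtain ⟨W, hW, hWp⟩ := ih
    by_cases ha : a ∈ W.support
    · obtain ⟨W', hs, hd⟩ := W.exists_suffix_of_mem_support ha
      exact ⟨W', hs.sublist.nodup hW, fun d hdm => hWp d (hd.subset hdm)⟩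
    · refine ⟨.cons e he W, List.nodup_cons.mpr ⟨ha, hW⟩, fun d hd => ?_⟩
      rcases List.mem_cons.mp hd with rfl | hd
      · exact hp
      · exact hWp d hd

lemma Reachable.refl {H : Multigraph} (a : H.V) : H.Reachable a a := ⟨.nil⟩

lemma Reachable.symm {H : Multigraph} {a b : H.V} (h : H.Reachable a b) : H.Reachable b a :=
  H.reachSetoid.iseqv.symm h

lemma Reachable.trans {H : Multigraph} {a b c : H.V} (h : H.Reachable a b)
    (h' : H.Reachable b c) : H.Reachable a c :=
  H.reachSetoid.iseqv.trans h h'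

lemma numComponents_eq_one (hconn : G.Connected) (v : G.V) : G.numComponents = 1 :=
  Nat.card_eq_one_iff_exists.mpr
    ⟨⟦v⟧, Quotient.ind fun x => Quotient.sound (hconn x v)⟩

def crossSet (G : Multigraph) (P : Set G.V) : Set G.E :=
  {e | ∃ x ∈ P, ∃ y ∉ P, G.ends e = s(x, y)}

lemma mem_crossSet_iff {P : Set G.V} {e : G.E} {x y : G.V} (h : G.ends e = s(x, y)) :
    e ∈ G.crossSet P ↔ ¬ (x ∈ P ↔ y ∈ P) := by
  constructor
  · rintro ⟨a, ha, b, hb, hab⟩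
    rcases Sym2.eq_iff.mp (hab.symm.trans h) with ⟨rfl, rfl⟩ | ⟨rfl, rfl⟩ <;> tauto
  · intro hxy
    by_cases hx : x ∈ P
    · exact ⟨x, hx, y, fun hy => hxy ⟨fun _ => hy, fun _ => hx⟩, h⟩
    · exact ⟨y, by tauto, x, hx, h.trans Sym2.eq_swap⟩

lemma crossSet_compl (P : Set G.V) : G.crossSet Pᶜ = G.crossSet P := by
  ext e
  have h := ends_eq_orientation e
  rw [mem_crossSet_iff h, mem_crossSet_iff h, Set.mem_compl_iff, Set.mem_compl_iff]
  tauto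

lemma mem_crossSet_of_forall_eq {P : Set G.V} {x : G.V} {e : G.E} (hx : x ∈ G.ends e)
    (hxP : x ∈ P) (hP : ∀ y ∈ P, y = x) : e ∈ G.crossSet P := by
  obtain ⟨y, hy⟩ := exists_ends_eq_of_mem hx
  exact ⟨x, hxP, y, fun hyP => ne_of_ends_eq hy (hP y hyP).symm, hy⟩

lemma exists_mem_crossSet {P : Set G.V} {a b : G.V} (W : G.Walk a b) (ha : a ∈ P)
    (hb : b ∉ P) : ∃ e x y, G.ends e = s(x, y) ∧ x ∈ P ∧ y ∉ P := by
  induction W with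
  | nil => exact absurd ha hb
  | @cons a c _ e h t ih =>
    by_cases hc : c ∈ P
    · exact ih hc hb
    · exact ⟨e, a, c, h, ha, hc⟩

section DeleteEdges

variable {F : Set G.E}

lemma reachable_deleteEdges_of_ends {e : G.E} {x y : G.V} (h : G.ends e = s(x, y))
    (he : e ∉ F) : (G.deleteEdges F).Reachable x y :=
  ⟨.cons ⟨e, he⟩ h .nil⟩

lemma Reachable.mono_deleteEdges {F' : Set G.E} (hF : F' ⊆ F) {a b}
    (h : (G.deleteEdges F).Reachable a b) : (G.deleteEdges F').Reachable a b := by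
  obtain ⟨W⟩ := h
  induction W with
  | nil => exact .refl _
  | cons e h _ ih =>
    exact (reachable_deleteEdges_of_ends (e := e.1) h fun he => e.2 (hF he)).trans ih

lemma mem_iff_of_reachable_deleteEdges {P : Set G.V} (hP : G.crossSet P ⊆ F) {a b}
    (h : (G.deleteEdges F).Reachable a b) : a ∈ P ↔ b ∈ P := by
  obtain ⟨W⟩ := h
  induction W with
  | nil => rfl
  | cons e h _ ih =>
    exact (not_not.mp fun hne => e.2 (hP ((mem_crossSet_iff (e := e.1) h).mpr hne))).trans ih

end DeleteEdges

lemma reachable_deleteEdges_crossSet_of_reflTransGen {p : G.E → G.V → Prop} {s x : G.V}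
    (hx : Relation.ReflTransGen (G.AdjBy p) s x) :
    (G.deleteEdges (G.crossSet {y | Relation.ReflTransGen (G.AdjBy p) s y})).Reachable s x := by
  induction hx with
  | refl => exact .refl _
  | @tail y z hy hyz ih =>
    obtain ⟨e, he, hp⟩ := hyz
    refine ih.trans (reachable_deleteEdges_of_ends he fun heS => ?_)
    exact (mem_crossSet_iff he).mp heS ⟨fun _ => hy.tail ⟨e, he, hp⟩, fun _ => hy⟩

theorem isInternalEdgeCut_crossSet (hconn : G.Connected) {C : Set G.V}
    (hC : ∀ x ∈ C, ∀ y ∈ C, (G.deleteEdges (G.crossSet C)).Reachable x y)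
    (hCc : ∀ x ∉ C, ∀ y ∉ C, (G.deleteEdges (G.crossSet C)).Reachable x y)
    (hC2 : ∃ x ∈ C, ∃ y ∈ C, x ≠ y) (hCc2 : ∃ x ∉ C, ∃ y ∉ C, x ≠ y) :
    G.IsInternalEdgeCut (G.crossSet C) := by
  obtain ⟨x₀, hx₀, x₁, hx₁, hx₀₁⟩ := hC2
  obtain ⟨y₀, hy₀, y₁, hy₁, hy₀₁⟩ := hCc2
  have hsep : ¬ (G.deleteEdges (G.crossSet C)).Reachable x₀ y₀ := fun h =>
    hy₀ ((mem_iff_of_reachable_deleteEdges subset_rfl h).mp hx₀)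
  have hH : (G.deleteEdges (G.crossSet C)).numComponents = 2 := by
    refine Nat.card_eq_two_iff.mpr ⟨⟦x₀⟧, ⟦y₀⟧, fun h => hsep (Quotient.exact h), ?_⟩
    refine Set.eq_univ_of_forall (Quotient.ind fun z => ?_)
    by_cases hz : z ∈ C
    · exact Or.inl (Quotient.sound (hC z hz x₀ hx₀))
    · exact Or.inr (Quotient.sound (hCc z hz y₀ hy₀))
  have hcard : ∀ D : Set G.V,
      (∀ x ∈ D, ∀ y ∈ D, (G.deleteEdges (G.crossSet C)).Reachable x y) →
      ∀ x ∈ D, ∀ y ∈ D, x ≠ y →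
      ∀ w ∈ D, 2 ≤ Nat.card {u | (G.deleteEdges (G.crossSet C)).Reachable u w} := by
    intro D hD x hx y hy hxy w hw
    rw [Nat.card_coe_set_eq, Nat.succ_le_iff, Set.one_lt_ncard_iff (Set.toFinite _)]
    exact ⟨x, y, hD x hx w hw, hD y hy w hw, hxy⟩
  have hG := numComponents_eq_one hconn x₀
  obtain ⟨e, x, y, he, hx, hy⟩ := exists_mem_crossSet (Classical.choice (hconn x₀ y₀)) hx₀ hy₀
  refine ⟨⟨⟨⟨e, x, hx, y, hy, he⟩, fun _ _ _ _ u w _ _ => hconn u w, by omega⟩, by omega⟩,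
    fun w _ => ?_⟩
  by_cases hw : w ∈ C
  · exact hcard C hC x₀ hx₀ x₁ hx₁ hx₀₁ w hw
  · exact hcard Cᶜ hCc y₀ hy₀ y₁ hy₁ hy₀₁ w hw

def componentAvoiding (G : Multigraph) (F : Set G.E) (t : G.V) : Set G.V :=
  {x | (G.deleteEdges F).Reachable t x}

lemma mem_componentAvoiding_self (F : Set G.E) (t : G.V) : t ∈ G.componentAvoiding F t :=
  .refl (H := G.deleteEdges F) t

section Component

variable {F : Set G.E} {t : G.V}

lemma crossSet_componentAvoiding_subset : G.crossSet (G.componentAvoiding F t) ⊆ F := by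
  rintro e ⟨x, hx, y, hy, he⟩
  by_contra heF
  exact hy (hx.trans (reachable_deleteEdges_of_ends he heF))

lemma reachable_of_mem_componentAvoiding {x y : G.V} (hx : x ∈ G.componentAvoiding F t)
    (hy : y ∈ G.componentAvoiding F t) :
    (G.deleteEdges (G.crossSet (G.componentAvoiding F t))).Reachable x y :=
  Reachable.mono_deleteEdges crossSet_componentAvoiding_subset (hx.symm.trans hy)

/-- A vertex outside `S` and outside the component `C` of `t` in `G - ∂S` lies in another
component of `G - ∂S`, which is attached to `S` by an edge of `∂S` not meeting `C`. -/
lemma reachable_of_not_mem_componentAvoiding (hconn : G.Connected) {S : Set G.V} {s : G.V}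
    (hsS : s ∈ S) (hS : ∀ x ∈ S, (G.deleteEdges (G.crossSet S)).Reachable s x) (htS : t ∉ S)
    {x : G.V} (hx : x ∉ G.componentAvoiding (G.crossSet S) t) :
    (G.deleteEdges (G.crossSet (G.componentAvoiding (G.crossSet S) t))).Reachable s x := by
  set C := G.componentAvoiding (G.crossSet S) t
  have hCS : G.crossSet C ⊆ G.crossSet S := crossSet_componentAvoiding_subset
  have hSC : ∀ y ∈ S, y ∉ C := fun y hy hyC =>
    htS ((mem_iff_of_reachable_deleteEdges subset_rfl hyC).mpr hy)
  by_cases hxS : x ∈ S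
  · exact (hS x hxS).mono_deleteEdges hCS
  set D := G.componentAvoiding (G.crossSet S) x
  have hDS : ∀ y ∈ D, y ∉ S := fun y hy hyS =>
    hxS ((mem_iff_of_reachable_deleteEdges subset_rfl hy).mpr hyS)
  obtain ⟨e, y, z, he, hyD, hzD⟩ := exists_mem_crossSet (Classical.choice (hconn x s))
    (mem_componentAvoiding_self _ x) (fun hsD => hDS s hsD hsS)
  have hzS : z ∈ S := by
    have := (mem_crossSet_iff he).mp (crossSet_componentAvoiding_subset ⟨y, hyD, z, hzD, he⟩)
    tauto
  have hyC : y ∉ C := fun hyC => hx (hyC.trans hyD.symm)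
  have heC : e ∉ G.crossSet C := fun heC =>
    (mem_crossSet_iff he).mp heC ⟨fun h => absurd h hyC, fun h => absurd h (hSC z hzS)⟩
  exact ((hS z hzS).mono_deleteEdges hCS).trans
    ((reachable_deleteEdges_of_ends he heC).symm.trans (hyD.mono_deleteEdges hCS).symm)

end Component

section Boundary

variable {S : Set G.V} {f : G.E → ℤ}

def Saturated (f : G.E → ℤ) (S : Set G.V) : Prop :=
  ∀ e x y, G.ends e = s(x, y) → x ∈ S → y ∉ S → incSign e x * f e = 1

lemma sum_outflow_eq (S : Set G.V) (f : G.E → ℤ) :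
    ∑ x ∈ S.toFinset, outflow f x = ∑ e, (∑ x ∈ S.toFinset, incSign e x) * f e := by
  simp only [outflow, Finset.sum_mul]
  exact Finset.sum_comm

lemma sum_incSign_of_ends_eq {e : G.E} {x y : G.V} (h : G.ends e = s(x, y)) (hx : x ∈ S)
    (hy : y ∉ S) : ∑ u ∈ S.toFinset, incSign e u = incSign e x := by
  refine Finset.sum_eq_single_of_mem x (Set.mem_toFinset.mpr hx) fun u hu hux => ?_
  refine incSign_eq_zero ?_
  rw [h, Sym2.mem_iff]
  rintro (rfl | rfl)
  exacts [hux rfl, hy (Set.mem_toFinset.mp hu)]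

lemma sum_incSign_of_not_mem_crossSet {e : G.E} (he : e ∉ G.crossSet S) :
    ∑ u ∈ S.toFinset, incSign e u = 0 := by
  have h := ends_eq_orientation e
  set x := (orientation e).1
  set y := (orientation e).2
  rw [mem_crossSet_iff h, not_not] at he
  by_cases hx : x ∈ S
  · rw [Finset.sum_eq_add_of_mem x y (Set.mem_toFinset.mpr hx)
      (Set.mem_toFinset.mpr (he.mp hx)) (ne_of_ends_eq h) fun u _ hu => ?_, incSign_swap h]
    · ring
    · exact incSign_eq_zero (by rw [h, Sym2.mem_iff]; tauto)
  · refine Finset.sum_eq_zero fun u hu => incSign_eq_zero ?_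
    rw [h, Sym2.mem_iff]
    rintro (rfl | rfl)
    exacts [hx (Set.mem_toFinset.mp hu), hx (he.mpr (Set.mem_toFinset.mp hu))]

lemma sum_outflow_nonpos
    (hS : ∀ e x y, G.ends e = s(x, y) → x ∈ S → y ∉ S → incSign e x * f e ≤ 0) :
    ∑ x ∈ S.toFinset, outflow f x ≤ 0 := by
  rw [sum_outflow_eq]
  refine Finset.sum_nonpos fun e _ => ?_
  by_cases he : e ∈ G.crossSet S
  · obtain ⟨x, hx, y, hy, h⟩ := he
    rw [sum_incSign_of_ends_eq h hx hy]
    exact hS e x y h hx hy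
  · rw [sum_incSign_of_not_mem_crossSet he, zero_mul]

lemma Saturated.sum_outflow_eq_card (hS : Saturated f S) :
    ∑ x ∈ S.toFinset, outflow f x = Nat.card (G.crossSet S) := by
  have : ∀ e, (∑ x ∈ S.toFinset, incSign e x) * f e = if e ∈ G.crossSet S then 1 else 0 := by
    intro e
    split_ifs with he
    · obtain ⟨x, hx, y, hy, h⟩ := he
      rw [sum_incSign_of_ends_eq h hx hy]
      exact hS e x y h hx hy
    · rw [sum_incSign_of_not_mem_crossSet he, zero_mul]
  rw [sum_outflow_eq, Finset.sum_congr rfl fun e _ => this e, Finset.sum_boole,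
    Nat.card_eq_fintype_card, Fintype.card_subtype]

lemma Saturated.outflow_eq_degree (hS : Saturated f S) {x : G.V} (hx : x ∈ S)
    (hxS : ∀ e, x ∈ G.ends e → e ∈ G.crossSet S) : outflow f x = G.degree x := by
  rw [← one_mul (G.degree x : ℤ)]
  refine outflow_eq_mul_degree fun e he => ?_
  obtain ⟨y, hy⟩ := exists_ends_eq_of_mem he
  exact hS e x y hy hx fun hyS =>
    (mem_crossSet_iff hy).mp (hxS e he) ⟨fun _ => hyS, fun _ => hx⟩

lemma Saturated.outflow_eq_neg_degree (hS : Saturated f S) {x : G.V} (hx : x ∉ S)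
    (hxS : ∀ e, x ∈ G.ends e → e ∈ G.crossSet S) : outflow f x = -G.degree x := by
  rw [← neg_one_mul]
  refine outflow_eq_mul_degree fun e he => ?_
  obtain ⟨y, hy⟩ := exists_ends_eq_of_mem he
  have hyS : y ∈ S := by
    by_contra hyS
    exact (mem_crossSet_iff hy).mp (hxS e he) ⟨fun h => absurd h hx, fun h => absurd h hyS⟩
  have := hS e y x (hy.trans Sym2.eq_swap) hyS hx
  rw [incSign_swap hy] at this
  linarith

end Boundary

structure IsUnitFlow (G : Multigraph) (f : G.E → ℤ) (s : G.V) (T : Finset G.V) : Prop where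
  abs_le_one : ∀ e, |f e| ≤ 1
  outflow_eq : ∀ x, outflow f x = if x = s then (T.card : ℤ) else if x ∈ T then -1 else 0

lemma isUnitFlow_zero (s : G.V) : G.IsUnitFlow 0 s ∅ where
  abs_le_one := by simp
  outflow_eq := by simp [outflow]

namespace IsUnitFlow

variable {f : G.E → ℤ} {s : G.V} {T : Finset G.V}

lemma sum_outflow_le (hf : G.IsUnitFlow f s T) (S : Finset G.V) :
    ∑ x ∈ S, outflow f x ≤ T.card :=
  calc ∑ x ∈ S, outflow f x ≤ ∑ x ∈ S, if x = s then (T.card : ℤ) else 0 :=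
        Finset.sum_le_sum fun x _ => by rw [hf.outflow_eq]; split_ifs <;> simp
    _ ≤ T.card := by rw [Finset.sum_ite_eq']; split_ifs <;> simp

/-- `incSign e x * f e ≤ 0` says that `e` can carry one more unit away from `x`. -/
lemma add_flow (hf : G.IsUnitFlow f s T) {t : G.V} (hts : t ≠ s) (htT : t ∉ T)
    {W : G.Walk s t} (hW : W.IsPath) (hres : ∀ d ∈ W.darts, incSign d.1 d.2 * f d.1 ≤ 0) :
    G.IsUnitFlow (f + W.flow) s (insert t T) where
  abs_le_one e := by
    by_cases he : e ∈ W.edges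
    · obtain ⟨x, hd⟩ := W.exists_mem_darts_of_mem_edges he
      have hfe := abs_le.mp (hf.abs_le_one e)
      have := hres _ hd
      rw [Pi.add_apply, W.flow_eq_incSign (Walk.edges_nodup_of_isPath hW) hd, abs_le]
      rcases incSign_eq_one_or_neg_one (W.mem_ends_of_mem_darts hd) with h | h <;>
        simp only [h] at this ⊢ <;> omega
    · rw [Pi.add_apply, Walk.flow_eq_zero he, add_zero]
      exact hf.abs_le_one e
  outflow_eq x := by
    rw [outflow_add, hf.outflow_eq, W.outflow_flow, Finset.card_insert_of_notMem htT]
    by_cases hxs : x = s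
    · simp [hxs, Ne.symm hts]
    · by_cases hxt : x = t <;> simp [hxs, hxt, htT, hts]

lemma saturated (hf : G.IsUnitFlow f s T) {S : Set G.V}
    (hS : ∀ e x y, G.ends e = s(x, y) → x ∈ S → incSign e x * f e ≤ 0 → y ∈ S) :
    Saturated f S := by
  intro e x y he hx hy
  have hpos : 0 < incSign e x * f e := not_le.mp fun hle => hy (hS e x y he hx hle)
  have hfe := abs_le.mp (hf.abs_le_one e)
  rcases incSign_eq_one_or_neg_one (he ▸ Sym2.mem_mk_left x y) with h | h <;>
    simp only [h] at hpos ⊢ <;> omega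

theorem exists_internalEdgeCut (hconn : G.Connected) (hf : G.IsUnitFlow f s T)
    (hdeg : T.card < G.degree s) {t : G.V} (hts : t ≠ s) (htT : t ∉ T)
    (ht : ¬ Relation.ReflTransGen (G.AdjBy fun e x => incSign e x * f e ≤ 0) s t) :
    ∃ F : Set G.E, Nat.card F ≤ T.card ∧ G.IsInternalEdgeCut F := by
  set S := {x | Relation.ReflTransGen (G.AdjBy fun e x => incSign e x * f e ≤ 0) s x}
  have hsS : s ∈ S := Relation.ReflTransGen.refl
  have htS : t ∉ S := ht
  have hsat : Saturated f S := hf.saturated fun e x y he hx hres => hx.tail ⟨e, he, hres⟩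
  have hcard : Nat.card (G.crossSet S) ≤ T.card := by
    have := hsat.sum_outflow_eq_card
    have := hf.sum_outflow_le S.toFinset
    omega
  set C := G.componentAvoiding (G.crossSet S) t
  have htC : t ∈ C := mem_componentAvoiding_self _ t
  have hCS : G.crossSet C ⊆ G.crossSet S := crossSet_componentAvoiding_subset
  have hsC : s ∉ C := fun h => htS ((mem_iff_of_reachable_deleteEdges subset_rfl h).mpr hsS)
  have hCc : ∀ x ∉ C, (G.deleteEdges (G.crossSet C)).Reachable s x := fun x hx =>
    reachable_of_not_mem_componentAvoiding hconn hsS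
      (fun _ hy => reachable_deleteEdges_crossSet_of_reflTransGen hy) htS hx
  refine ⟨G.crossSet C, (Nat.card_mono (Set.toFinite _) hCS).trans hcard,
    isInternalEdgeCut_crossSet hconn (fun x hx y hy => reachable_of_mem_componentAvoiding hx hy)
      (fun x hx y hy => (hCc x hx).symm.trans (hCc y hy)) ?_ ?_⟩
  · by_contra! hC
    have h1 := hsat.outflow_eq_neg_degree htS fun e he =>
      hCS (mem_crossSet_of_forall_eq he htC fun y hy => hC y hy t htC)
    have h2 := hf.outflow_eq t
    have h3 := one_le_degree hconn hts
    simp only [hts, htT, if_false] at h2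
    omega
  · by_contra! hC
    have h1 := hsat.outflow_eq_degree hsS fun e he =>
      hCS (crossSet_compl C ▸ mem_crossSet_of_forall_eq he hsC fun y hy => hC y hy s hsC)
    have h2 := hf.outflow_eq s
    simp only [if_true] at h2
    omega

end IsUnitFlow

theorem exists_isUnitFlow (hconn : G.Connected) {s : G.V} {A : Finset G.V} (hsA : s ∉ A)
    (hdeg : A.card ≤ G.degree s)
    (hcut : ∀ F : Set G.E, G.IsInternalEdgeCut F → A.card ≤ Nat.card F) :
    ∃ f, G.IsUnitFlow f s A := by
  suffices ∀ n ≤ A.card, ∃ T ⊆ A, T.card = n ∧ ∃ f, G.IsUnitFlow f s T by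
    obtain ⟨T, hTA, hT, hf⟩ := this A.card le_rfl
    exact Finset.eq_of_subset_of_card_le hTA hT.ge ▸ hf
  intro n
  induction n with
  | zero => exact fun _ => ⟨∅, Finset.empty_subset _, rfl, 0, isUnitFlow_zero s⟩
  | succ n ih =>
    intro hn
    obtain ⟨T, hTA, rfl, f, hf⟩ := ih (by omega)
    obtain ⟨t, htA, htT⟩ := Finset.exists_of_ssubset
      (Finset.ssubset_iff_subset_ne.mpr ⟨hTA, by rintro rfl; omega⟩)
    have hts : t ≠ s := fun h => hsA (h ▸ htA)
    by_cases hres : Relation.ReflTransGen (G.AdjBy fun e x => incSign e x * f e ≤ 0) s t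
    · obtain ⟨W, hW, hWres⟩ := exists_isPath_of_reflTransGen hres
      exact ⟨insert t T, Finset.insert_subset htA hTA, Finset.card_insert_of_notMem htT,
        _, hf.add_flow hts htT hW hWres⟩
    · obtain ⟨F, hF, hFcut⟩ := hf.exists_internalEdgeCut hconn (by omega) hts htT hres
      have := hcut F hFcut
      omega

/-- Otherwise the vertices reached by following the flow would have positive total outflow
although no flow leaves them. -/
lemma exists_reflTransGen_outflow_neg {f : G.E → ℤ} {s : G.V} (hs : 0 < outflow f s) :
    ∃ z, Relation.ReflTransGen (G.AdjBy fun e x => 0 < incSign e x * f e) s z ∧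
      outflow f z < 0 := by
  by_contra! h
  set R := {z | Relation.ReflTransGen (G.AdjBy fun e x => 0 < incSign e x * f e) s z}
  have hle := sum_outflow_nonpos (S := R) fun e x y he hx hy =>
    not_lt.mp fun hpos => hy (hx.tail ⟨e, he, hpos⟩)
  have hge := Finset.single_le_sum (s := R.toFinset) (fun z hz => h z (Set.mem_toFinset.mp hz))
    (Set.mem_toFinset.mpr (Relation.ReflTransGen.refl : s ∈ R))
  linarith

namespace IsUnitFlow

variable {f : G.E → ℤ} {s : G.V} {T : Finset G.V}

lemma sub_flow (hf : G.IsUnitFlow f s T) {z : G.V} (hzs : z ≠ s) (hzT : z ∈ T)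
    {W : G.Walk s z} (hW : W.IsPath) (hpos : ∀ d ∈ W.darts, 0 < incSign d.1 d.2 * f d.1) :
    G.IsUnitFlow (f - W.flow) s (T.erase z) ∧ ∀ e ∈ W.edges, (f - W.flow) e = 0 := by
  have hzero : ∀ e ∈ W.edges, (f - W.flow) e = 0 := by
    intro e he
    obtain ⟨x, hd⟩ := W.exists_mem_darts_of_mem_edges he
    have hfe := abs_le.mp (hf.abs_le_one e)
    have := hpos _ hd
    rw [Pi.sub_apply, W.flow_eq_incSign (Walk.edges_nodup_of_isPath hW) hd]
    rcases incSign_eq_one_or_neg_one (W.mem_ends_of_mem_darts hd) with h | h <;>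
      simp only [h] at this ⊢ <;> omega
  refine ⟨⟨fun e => ?_, fun x => ?_⟩, hzero⟩
  · by_cases he : e ∈ W.edges
    · simp [hzero e he]
    · rw [Pi.sub_apply, Walk.flow_eq_zero he, sub_zero]
      exact hf.abs_le_one e
  · rw [outflow_sub, hf.outflow_eq, W.outflow_flow, Finset.card_erase_of_mem hzT,
      Nat.cast_sub (Finset.card_pos.mpr ⟨z, hzT⟩)]
    by_cases hxs : x = s
    · simp [hxs, Ne.symm hzs]
    · by_cases hxz : x = z <;> simp [hxs, hxz, hzT, hzs]

lemma exists_path_isUnitFlow_sub (hf : G.IsUnitFlow f s T) (hT : T.Nonempty) :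
    ∃ z ∈ T, ∃ W : G.Walk s z, W.IsPath ∧ G.IsUnitFlow (f - W.flow) s (T.erase z) ∧
      ∀ e ∈ W.edges, f e ≠ 0 ∧ (f - W.flow) e = 0 := by
  have hs : 0 < outflow f s := by
    rw [hf.outflow_eq, if_pos rfl]
    exact_mod_cast hT.card_pos
  obtain ⟨z, hreach, hz⟩ := exists_reflTransGen_outflow_neg hs
  have hzs : z ≠ s := fun h => by rw [h] at hz; omega
  have hzT : z ∈ T := by
    by_contra hzT
    rw [hf.outflow_eq, if_neg hzs, if_neg hzT] at hz
    exact lt_irrefl 0 hz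
  obtain ⟨W, hW, hWpos⟩ := exists_isPath_of_reflTransGen hreach
  obtain ⟨hg, hgW⟩ := hf.sub_flow hzs hzT hW hWpos
  refine ⟨z, hzT, W, hW, hg, fun e he => ⟨fun hfe => ?_, hgW e he⟩⟩
  obtain ⟨x, hd⟩ := W.exists_mem_darts_of_mem_edges he
  simpa [hfe] using hWpos _ hd

theorem exists_edgeDisjoint_paths (hf : G.IsUnitFlow f s T) :
    ∃ P : ∀ t ∈ T, G.Walk s t, (∀ t ht, (P t ht).IsPath) ∧
      (∀ t ht, ∀ e ∈ (P t ht).edges, f e ≠ 0) ∧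
      ∀ t ht t' ht', t ≠ t' → EdgeDisjoint (P t ht) (P t' ht') := by
  induction T using Finset.strongInduction generalizing f with
  | H T ih =>
  rcases T.eq_empty_or_nonempty with rfl | hT
  · exact ⟨fun t ht => absurd ht (Finset.notMem_empty t), by simp, by simp, by simp⟩
  obtain ⟨z, hzT, W, hW, hg, hWf⟩ := hf.exists_path_isUnitFlow_sub hT
  obtain ⟨P, hPpath, hPg, hPdisj⟩ := ih _ (Finset.erase_ssubset hzT) hg
  have hPW : ∀ t ht, EdgeDisjoint (P t ht) W := fun t ht e he heW =>
    hPg t ht e he (hWf e heW).2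
  have hPf : ∀ t ht, ∀ e ∈ (P t ht).edges, f e ≠ 0 := fun t ht e he => by
    simpa [Walk.flow_eq_zero fun heW => hPW t ht e he heW] using hPg t ht e he
  refine ⟨fun t ht => if h : t = z then h ▸ W else P t (Finset.mem_erase.mpr ⟨h, ht⟩),
    fun t ht => ?_, fun t ht => ?_, fun t ht t' ht' htt' => ?_⟩
  · dsimp only
    split_ifs with h
    · subst h; exact hW
    · exact hPpath _ _
  · dsimp only
    split_ifs with h
    · subst h; exact fun e he => (hWf e he).1
    · exact hPf _ _
  · dsimp only
    split_ifs with h h' h'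
    · exact absurd (h.trans h'.symm) htt'
    · subst h; exact fun e he he' => hPW _ _ e he' he
    · subst h'; exact hPW _ _
    · exact hPdisj _ _ _ _ htt'

end IsUnitFlow

theorem statement2_general (k : ℕ) (G : Multigraph) (hconn : G.Connected)
    (hnocut : ∀ F : Set G.E, Nat.card ↥F ≤ k - 1 → ¬ G.IsInternalEdgeCut F)
    (i : ℕ) (hik : i ≤ k - 1)
    (v : G.V) (vs : Fin i → G.V) (hinj : Function.Injective vs)
    (hv : ∀ j : Fin i, vs j ≠ v) (hdeg : i ≤ G.degree v) :
    ∃ P : (j : Fin i) → G.Walk v (vs j),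
      (∀ j, (P j).IsPath) ∧ ∀ j j' : Fin i, j ≠ j' → EdgeDisjoint (P j) (P j') := by
  set A := Finset.univ.image vs
  have hmem : ∀ j, vs j ∈ A := fun j => Finset.mem_image_of_mem _ (Finset.mem_univ j)
  have hcard : A.card = i := by
    rw [Finset.card_image_of_injective _ hinj, Finset.card_univ, Fintype.card_fin]
  have hvA : v ∉ A := by simpa [A, Finset.mem_image] using hv
  obtain ⟨f, hf⟩ := exists_isUnitFlow hconn hvA (hcard ▸ hdeg) fun F hF =>
    Nat.le_of_not_lt fun h => hnocut F (by omega) hF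
  obtain ⟨P, hpath, -, hdisj⟩ := hf.exists_edgeDisjoint_paths
  exact ⟨fun j => P (vs j) (hmem j), fun j => hpath _ _,
    fun j j' hjj' => hdisj _ _ _ _ (hinj.ne hjj')⟩

theorem statement2 (k : ℕ) (hk : 1 ≤ k) (G : Multigraph) (hconn : G.Connected)
    (hnocut : ∀ F : Set G.E, Nat.card ↥F ≤ k - 1 → ¬ G.IsInternalEdgeCut F)
    (i : ℕ) (hi : 1 ≤ i) (hik : i ≤ k - 1)
    (v : G.V) (vs : Fin i → G.V) (hinj : Function.Injective vs)
    (hv : ∀ j : Fin i, vs j ≠ v) (hdeg : i ≤ G.degree v) :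
    ∃ P : (j : Fin i) → G.Walk v (vs j),
      (∀ j, (P j).IsPath) ∧ ∀ j j' : Fin i, j ≠ j' → EdgeDisjoint (P j) (P j') :=
  statement2_general k G hconn hnocut i hik v vs hinj hv hdeg

end Multigraph
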